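/- If the multipede M(G) is asymmetric, then for any ordered base graph H, function f on its edges, and set X of segments of size |E(H)|, the gluing of M(G) and CFI(H,f) at X is asymmetric. -/

import Mathlib

section Gluing

variable {VG W VH : Type*}

/-- The neighborhood of a constraint vertex, given the ordered triple of its neighbors. -/
def nbrSet (nbr : VG → W × W × W) : VG → Set W :=
  fun v => {(nbr v).1, (nbr v).2.1, (nbr v).2.2}

/-- The ternary relation of the multipede `M(G)`. -/
def multiRel (nbr : VG → W × W × W) :
    (W × ZMod 2) → (W × ZMod 2) → (W × ZMod 2) → Prop :=
  fun a b c => (∃ v, nbr v = (a.1, b.1, c.1)) ∧ a.2 + b.2 + c.2 = 0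

/-- A gadget vertex of the CFI graph over the base graph `H`. -/
def GadgetVert [Fintype VH] (H : SimpleGraph VH) : Type _ :=
  {p : VH × (VH → ZMod 2) // (∀ w, ¬ H.Adj p.1 w → p.2 w = 0) ∧ ∑ w, p.2 w = 0}

variable [Fintype VH] [LinearOrder VH]

/-- CFI adjacency in the gluing, with one edge-vertex pair per base edge (identified with the
feet of the segments in `X` via `ι`): the gadget vertex `g = (a, S)` is adjacent to the foot
`p = (w, i)` where `w` is the segment of the base edge `e = {a, b}` iff `S b = i` (when
`a < b`), resp. `S b = i + f e` (when `b < a`). -/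
def gluAdj (H : SimpleGraph VH) (f : Sym2 VH → ZMod 2) (X : Set W)
    (ι : {e : Sym2 VH // e ∈ H.edgeSet} ≃ X)
    (g : GadgetVert H) (p : W × ZMod 2) : Prop :=
  ∃ (e : {e : Sym2 VH // e ∈ H.edgeSet}) (a b : VH),
    ((ι e : W) = p.1) ∧ e.val = s(a, b) ∧ g.val.1 = a ∧
    (if a < b then g.val.2 b = p.2 else g.val.2 b = p.2 + f e.val)

/-- The (symmetrized) CFI edges of the gluing. -/
def gluCfiEdge (nbr : VG → W × W × W) (H : SimpleGraph VH) (f : Sym2 VH → ZMod 2)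
    (X : Set W) (ι : {e : Sym2 VH // e ∈ H.edgeSet} ≃ X) :
    ((W × ZMod 2) ⊕ GadgetVert H) → ((W × ZMod 2) ⊕ GadgetVert H) → Prop :=
  fun x y =>
    (∃ g p, x = Sum.inr g ∧ y = Sum.inl p ∧ gluAdj H f X ι g p) ∨
    (∃ g p, y = Sum.inr g ∧ x = Sum.inl p ∧ gluAdj H f X ι g p)

/-- The ternary relation of the gluing `G(M(G), X, CFI(H, f))`: the multipede relation on
feet, together with every CFI edge `(x, y)` encoded as the triple `(x, y, y)`. -/
def gluRel (nbr : VG → W × W × W) (H : SimpleGraph VH) (f : Sym2 VH → ZMod 2)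
    (X : Set W) (ι : {e : Sym2 VH // e ∈ H.edgeSet} ≃ X) :
    ((W × ZMod 2) ⊕ GadgetVert H) → ((W × ZMod 2) ⊕ GadgetVert H) →
      ((W × ZMod 2) ⊕ GadgetVert H) → Prop :=
  fun x y z =>
    (∃ a b c, x = Sum.inl a ∧ y = Sum.inl b ∧ z = Sum.inl c ∧ multiRel nbr a b c) ∨
    (y = z ∧ gluCfiEdge nbr H f X ι x y)

/-- The coloring of the gluing: a foot is colored by its segment, a gadget vertex by its base
vertex. -/
def gluColor (H : SimpleGraph VH) : ((W × ZMod 2) ⊕ GadgetVert H) → W ⊕ VH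
  | Sum.inl p => Sum.inl p.1
  | Sum.inr g => Sum.inr g.val.1

end Gluing

/-- If the multipede `M(G)` is asymmetric, then for any connected ordered
base graph `H`, any `f : E(H) → F₂`, and any set `X` of segments of size `|E(H)|`
(identified with the edge-vertex pairs via `ι`), the gluing of `M(G)` and `CFI(H, f)` at `X`
is asymmetric: every permutation of its universe preserving the coloring and the ternary
relation is the identity. -/
theorem gluing_asymmetric {VG W VH : Type*} [Finite W] [Fintype VH] [LinearOrder VH]
    (nbr : VG → W × W × W) (hdeg : ∀ v, (nbrSet nbr v).ncard = 3)
    (hasym : ∀ φ₀ : (W × ZMod 2) ≃ (W × ZMod 2),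
      (∀ a, (φ₀ a).1 = a.1) →
      (∀ a b c, multiRel nbr (φ₀ a) (φ₀ b) (φ₀ c) ↔ multiRel nbr a b c) →
      φ₀ = Equiv.refl (W × ZMod 2))
    (H : SimpleGraph VH) (hconn : H.Connected) (f : Sym2 VH → ZMod 2)
    (X : Set W) (ι : {e : Sym2 VH // e ∈ H.edgeSet} ≃ X)
    (φ : ((W × ZMod 2) ⊕ GadgetVert H) ≃ ((W × ZMod 2) ⊕ GadgetVert H))
    (hcol : ∀ x, gluColor H (φ x) = gluColor H x)
    (hrel : ∀ x y z, gluRel nbr H f X ι (φ x) (φ y) (φ z) ↔ gluRel nbr H f X ι x y z) :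
    φ = Equiv.refl ((W × ZMod 2) ⊕ GadgetVert H) := by
  classical
  -- φ maps feet to feet and gadgets to gadgets
  have hmapl : ∀ a, ∃ b, φ (Sum.inl a) = Sum.inl b := by
    intro a
    rcases h : φ (Sum.inl a) with b | g
    · exact ⟨b, rfl⟩
    · have := hcol (Sum.inl a); rw [h] at this; simp [gluColor] at this
  have hmapr : ∀ g, ∃ g', φ (Sum.inr g) = Sum.inr g' := by
    intro g
    rcases h : φ (Sum.inr g) with b | g'
    · have := hcol (Sum.inr g); rw [h] at this; simp [gluColor] at this
    · exact ⟨g', rfl⟩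
  choose F hF using hmapl
  choose G hG using hmapr
  have hmapl' : ∀ a, ∃ b, φ.symm (Sum.inl a) = Sum.inl b := by
    intro a
    rcases h : φ.symm (Sum.inl a) with b | g
    · exact ⟨b, rfl⟩
    · have h2 : φ (Sum.inr g) = Sum.inl a := by rw [← h, Equiv.apply_symm_apply]
      rw [hG g] at h2; exact absurd h2 (by simp)
  choose Finv hFinv using hmapl'
  have hleft : ∀ a, Finv (F a) = a := by
    intro a
    have h : φ.symm (Sum.inl (F a)) = Sum.inl a := by
      rw [← hF, Equiv.symm_apply_apply]
    rw [hFinv] at h; exact Sum.inl.inj h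
  have hright : ∀ a, F (Finv a) = a := by
    intro a
    have h : φ (Sum.inl (Finv a)) = Sum.inl a := by
      rw [← hFinv, Equiv.apply_symm_apply]
    rw [hF] at h; exact Sum.inl.inj h
  -- the induced permutation on feet
  let φ₀ : (W × ZMod 2) ≃ (W × ZMod 2) := ⟨F, Finv, hleft, hright⟩
  have hrelMulti : ∀ a b c : W × ZMod 2,
      gluRel nbr H f X ι (Sum.inl a) (Sum.inl b) (Sum.inl c) ↔ multiRel nbr a b c := by
    intro a b c
    constructor
    · rintro (⟨a', b', c', ha, hb, hc, h⟩ | ⟨heq, (⟨g, p, hx, hy, _⟩ | ⟨g, p, hy, hx, _⟩)⟩)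
      · injection ha with ha; injection hb with hb; injection hc with hc
        subst ha hb hc; exact h
      · exact absurd hx (by simp)
      · exact absurd hy (by simp)
    · intro h; exact Or.inl ⟨a, b, c, rfl, rfl, rfl, h⟩
  have hφ₀id : φ₀ = Equiv.refl _ := by
    apply hasym
    · intro a
      have h := hcol (Sum.inl a)
      rw [hF] at h
      have h' : (F a).1 = a.1 := by simpa [gluColor] using h
      exact h'
    · intro a b c
      have h := hrel (Sum.inl a) (Sum.inl b) (Sum.inl c)
      rw [hF, hF, hF, hrelMulti, hrelMulti] at h
      exact h
  have hFid : ∀ a, F a = a := fun a => by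
    have := Equiv.ext_iff.mp hφ₀id a; simpa [φ₀] using this
  -- gadget vertices are fixed
  have hadjRel : ∀ (g : GadgetVert H) (p : W × ZMod 2),
      gluRel nbr H f X ι (Sum.inr g) (Sum.inl p) (Sum.inl p) ↔ gluAdj H f X ι g p := by
    intro g p
    constructor
    · rintro (⟨a, b, c, ha, _, _, _⟩ | ⟨_, (⟨g', p', hx, hy, h⟩ | ⟨g', p', hy, hx, h⟩)⟩)
      · exact absurd ha (by simp)
      · injection hx with hx; injection hy with hy; subst hx hy; exact h
      · exact absurd hy (by simp)
    · intro h; exact Or.inr ⟨rfl, Or.inl ⟨g, p, rfl, rfl, h⟩⟩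
  have hGadj : ∀ g p, gluAdj H f X ι (G g) p ↔ gluAdj H f X ι g p := by
    intro g p
    have h := hrel (Sum.inr g) (Sum.inl p) (Sum.inl p)
    rw [hG, hF, hFid, hadjRel, hadjRel] at h
    exact h
  have hGbase : ∀ g, (G g).val.1 = g.val.1 := by
    intro g
    have h := hcol (Sum.inr g)
    rw [hG] at h
    simpa [gluColor] using h
  have two : ∀ u v : ZMod 2, u + v + v = u := by decide
  have hGid : ∀ g, G g = g := by
    intro g
    apply Subtype.ext
    apply Prod.ext
    · exact hGbase g
    · funext b
      by_cases hb : H.Adj g.val.1 b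
      · set a := g.val.1 with ha
        have he : s(a, b) ∈ H.edgeSet := hb
        set i : ZMod 2 := if a < b then g.val.2 b else g.val.2 b + f (s(a, b)) with hi
        have hadj : gluAdj H f X ι g ((ι ⟨s(a, b), he⟩ : W), i) := by
          refine ⟨⟨s(a, b), he⟩, a, b, rfl, rfl, rfl, ?_⟩
          by_cases hab : a < b
          · simp [hi, hab]
          · simp [hi, hab, two]
        have hadj' := (hGadj g _).mpr hadj
        obtain ⟨e', a', b', hιe, he', ha', hcond⟩ := hadj'
        have he'' : e' = ⟨s(a, b), he⟩ := ι.injective (Subtype.coe_injective hιe)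
        subst he''
        have ha'' : a' = a := by rw [← ha']; exact hGbase g
        subst ha''
        have hb' : b' = b := by
          rw [Sym2.eq_iff] at he'
          rcases he' with ⟨-, h1⟩ | ⟨h1, h2⟩
          · exact h1.symm
          · exact h1.symm.trans h2.symm
        rw [hb'] at hcond
        by_cases hab : a < b
        · rw [if_pos hab] at hcond
          rw [hcond]
          simp [hi, hab]
        · rw [if_neg hab] at hcond
          rw [hcond]
          simp [hi, hab, two]
      · have h1 := g.property.1 b hb
        have h2 := (G g).property.1 b (by rw [hGbase]; exact hb)
        rw [h1, h2]
  apply Equiv.ext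
  intro x
  cases x with
  | inl a => rw [hF, hFid]; rfl
  | inr g => rw [hG, hGid]; rfl
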